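/- If Y is a compact metric space and every connected component of Y has covering dimension ≤ L < ∞, then dim(Y) ≤ L. -/
import Mathlib


open Metric Set

variable {X : Type*} [MetricSpace X]

/-- mesh of a family of sets is < ε -/
def MeshLT (𝒰 : Set (Set X)) (ε : ℝ) : Prop := ∀ A ∈ 𝒰, Metric.diam A < ε

/-- the order of a family of sets is ≤ n : every subfamily with more than n+1
elements has empty intersection -/
def OrdLE (𝒰 : Set (Set X)) (n : ℕ) : Prop :=
  ∀ 𝒱 : Finset (Set X), ↑𝒱 ⊆ 𝒰 → n + 1 < 𝒱.card → ⋂₀ (𝒱 : Set (Set X)) = ∅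

/-- the ε-dimension of Y is ≤ n -/
def DimEpsLE (Y : Set X) (ε : ℝ) (n : ℕ) : Prop :=
  ∃ 𝒰 : Set (Set X), (∀ A ∈ 𝒰, IsOpen A) ∧ Y ⊆ ⋃₀ 𝒰 ∧ MeshLT 𝒰 ε ∧ OrdLE 𝒰 n

/-- the ε-dimension of Y, as an extended natural number -/
noncomputable def dimEps (Y : Set X) (ε : ℝ) : ℕ∞ :=
  sInf {d : ℕ∞ | ∃ n : ℕ, d = n ∧ DimEpsLE Y ε n}

/-- the topological (covering) dimension of Y, as lim_{ε→0} dim_ε Y -/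
noncomputable def topDim (Y : Set X) : ℕ∞ :=
  ⨆ (ε : ℝ) (_ : 0 < ε), dimEps Y ε

/-- dim Y > D, for an integer D ≥ -1 (nonempty sets have dimension ≥ 0 > -1) -/
def DimGT (Y : Set X) (D : ℤ) : Prop := D < 0 ∨ ((D.toNat : ℕ∞) < topDim Y)

/-- the n-th iterate (n ∈ ℤ) of a homeomorphism -/
def hiter (f : X ≃ₜ X) (n : ℤ) : X → X := ⇑(f.toEquiv ^ n)

/-- partially expansive with central dimension D and expansive constant ε -/
def PartiallyExpansive (f : X ≃ₜ X) (D : ℤ) (ε : ℝ) : Prop :=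
  ∀ C : Set X, IsCompact C → C.Nontrivial → DimGT C D →
    ∃ k : ℤ, ε ≤ Metric.diam (hiter f k '' C)
lemma DimEpsLE.mono {Y : Set X} {ε : ℝ} {n m : ℕ} (h : DimEpsLE Y ε n) (hnm : n ≤ m) :
    DimEpsLE Y ε m := by
  obtain ⟨𝒰, h1, h2, h3, h4⟩ := h
  exact ⟨𝒰, h1, h2, h3, fun 𝒱 hs hc => h4 𝒱 hs (lt_of_le_of_lt (by omega) hc)⟩

lemma dimEpsLE_of_dimEps_le {Y : Set X} {ε : ℝ} {L : ℕ} (h : dimEps Y ε ≤ (L : ℕ∞)) :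
    DimEpsLE Y ε L := by
  by_contra hC
  have hge : ((L : ℕ∞) + 1) ≤ dimEps Y ε := by
    apply le_sInf
    rintro d ⟨n, rfl, hn⟩
    have hLn : L < n := by
      by_contra hle
      exact hC (hn.mono (by omega))
    exact Order.add_one_le_of_lt (by exact_mod_cast hLn)
  have : ((L : ℕ∞) + 1) ≤ (L : ℕ∞) := hge.trans h
  have : ((L + 1 : ℕ) : ℕ∞) ≤ ((L : ℕ) : ℕ∞) := by push_cast; exact this
  exact absurd (Nat.cast_le.mp this) (by omega)

lemma exists_clopen_of_connectedComponent_subset {Y : Type*} [TopologicalSpace Y]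
    [T2Space Y] [CompactSpace Y] (x : Y) {U : Set Y} (hU : IsOpen U)
    (hsub : connectedComponent x ⊆ U) :
    ∃ V : Set Y, IsClopen V ∧ connectedComponent x ⊆ V ∧ V ⊆ U := by
  have hCC := connectedComponent_eq_iInter_isClopen x
  have hcompl : IsCompact Uᶜ := (hU.isClosed_compl).isCompact
  have hempty : Uᶜ ∩ ⋂ s : { s : Set Y // IsClopen s ∧ x ∈ s }, (s : Set Y) = ∅ := by
    rw [← hCC]
    rw [Set.eq_empty_iff_forall_notMem]
    rintro y ⟨hy1, hy2⟩
    exact hy1 (hsub hy2)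
  obtain ⟨u, hu⟩ := hcompl.elim_finite_subfamily_closed _ (fun s => s.2.1.1) hempty
  refine ⟨⋂ s ∈ u, (s : Set Y), isClopen_biInter_finset (fun s _ => s.2.1), ?_, ?_⟩
  · rw [hCC]
    exact fun y hy => Set.mem_iInter₂.2 fun s _ => Set.mem_iInter.1 hy s
  · intro y hy
    by_contra hyU
    rw [Set.eq_empty_iff_forall_notMem] at hu
    exact hu y ⟨hyU, hy⟩


/-- If every connected component of a compact metric space has covering dimension
≤ L, then the whole space has covering dimension ≤ L. -/
theorem topDim_le_of_components {Y : Type*} [MetricSpace Y] [CompactSpace Y] (L : ℕ)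
    (h : ∀ x : Y, topDim (connectedComponent x) ≤ (L : ℕ∞)) :
    topDim (Set.univ : Set Y) ≤ (L : ℕ∞) := by
  classical
  rw [topDim]
  refine iSup₂_le fun ε hε => ?_
  have main : DimEpsLE (Set.univ : Set Y) ε L := by
    have hcomp : ∀ x : Y, DimEpsLE (connectedComponent x) ε L := fun x =>
      dimEpsLE_of_dimEps_le <| le_trans
        (le_iSup₂ (f := fun (ε : ℝ) (_ : 0 < ε) => dimEps (connectedComponent x) ε) ε hε) (h x)
    choose 𝒰 hopen hcov hmesh hord using hcomp
    have hKex : ∀ x : Y, ∃ V : Set Y, IsClopen V ∧ connectedComponent x ⊆ V ∧ V ⊆ ⋃₀ 𝒰 x :=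
      fun x => exists_clopen_of_connectedComponent_subset x (isOpen_sUnion (hopen x)) (hcov x)
    choose K hKclopen hKsub hKU using hKex
    obtain ⟨t, ht⟩ := isCompact_univ.elim_finite_subcover K (fun x => (hKclopen x).2)
      (fun y _ => Set.mem_iUnion.2 ⟨y, hKsub y mem_connectedComponent⟩)
    set n := t.card with hn
    set e : ↥t ≃ Fin n := t.equivFin with he
    set g : Fin n → Set Y := fun i => K ((e.symm i : ↥t) : Y) with hg
    set K' : Fin n → Set Y := fun i => g i \ ⋃ j ∈ Finset.Iio i, g j with hK'
    have hK'clopen : ∀ i, IsClopen (K' i) :=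
      fun i => ((hKclopen _).diff (isClopen_biUnion_finset fun j _ => hKclopen _))
    have hK'sub : ∀ i, K' i ⊆ g i := fun i => Set.diff_subset
    have hK'disj : ∀ i j, i ≠ j → ∀ y, y ∈ K' i → y ∈ K' j → False := by
      intro i j hij y hyi hyj
      rcases lt_or_gt_of_ne hij with hlt | hlt
      · exact hyj.2 (Set.mem_biUnion (Finset.mem_Iio.2 hlt) hyi.1)
      · exact hyi.2 (Set.mem_biUnion (Finset.mem_Iio.2 hlt) hyj.1)
    have hK'cov : ∀ y : Y, ∃ i, y ∈ K' i := by
      intro y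
      have hy : ∃ i, y ∈ g i := by
        obtain ⟨x, hx, hyx⟩ := Set.mem_iUnion₂.1 (ht (Set.mem_univ y))
        refine ⟨e ⟨x, hx⟩, ?_⟩
        simp only [hg, Equiv.symm_apply_apply]
        exact hyx
      set s : Finset (Fin n) := Finset.univ.filter (fun j => y ∈ g j) with hs
      have hsne : s.Nonempty := ⟨hy.choose, by simp [hs, hy.choose_spec]⟩
      refine ⟨s.min' hsne, (Finset.mem_filter.1 (s.min'_mem hsne)).2, ?_⟩
      intro hmem
      obtain ⟨j, hj, hyj⟩ := Set.mem_iUnion₂.1 hmem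
      exact absurd (s.min'_le j (by simp [hs, hyj])) (not_le.2 (Finset.mem_Iio.1 hj))
    set 𝒱 : Set (Set Y) := ⋃ i : Fin n, (fun A => A ∩ K' i) '' 𝒰 ((e.symm i : ↥t) : Y) with h𝒱
    have hmem𝒱 : ∀ B ∈ 𝒱, ∃ i, ∃ A ∈ 𝒰 ((e.symm i : ↥t) : Y), B = A ∩ K' i := by
      intro B hB
      obtain ⟨i, hi⟩ := Set.mem_iUnion.1 hB
      obtain ⟨A, hA, hAB⟩ := hi
      exact ⟨i, A, hA, hAB.symm⟩
    refine ⟨𝒱, ?_, ?_, ?_, ?_⟩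
    · intro B hB
      obtain ⟨i, A, hA, rfl⟩ := hmem𝒱 B hB
      exact (hopen _ A hA).inter (hK'clopen i).2
    · intro y _
      obtain ⟨i, hyi⟩ := hK'cov y
      obtain ⟨A, hA, hyA⟩ := Set.mem_sUnion.1 (hKU _ (hK'sub i hyi))
      exact ⟨A ∩ K' i, Set.mem_iUnion.2 ⟨i, Set.mem_image_of_mem _ hA⟩, ⟨hyA, hyi⟩⟩
    · intro B hB
      obtain ⟨i, A, hA, rfl⟩ := hmem𝒱 B hB
      exact lt_of_le_of_lt (Metric.diam_mono Set.inter_subset_left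
        (isCompact_univ.isBounded.subset (Set.subset_univ A))) (hmesh _ A hA)
    · intro 𝒱' hsub hcard
      rw [Set.eq_empty_iff_forall_notMem]
      intro y hy
      have hyB : ∀ B ∈ 𝒱', y ∈ B := fun B hB => Set.mem_sInter.1 hy B (by exact_mod_cast hB)
      have hne : 𝒱'.Nonempty := Finset.card_pos.1 (by omega)
      obtain ⟨B₀, hB₀⟩ := hne
      obtain ⟨i₀, A₀, hA₀, hB₀eq⟩ := hmem𝒱 B₀ (hsub (by exact_mod_cast hB₀))
      have hyK' : y ∈ K' i₀ := by
        have := hyB B₀ hB₀; rw [hB₀eq] at this; exact this.2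
      have key : ∀ B ∈ 𝒱', ∃ A ∈ 𝒰 ((e.symm i₀ : ↥t) : Y), B = A ∩ K' i₀ := by
        intro B hB
        obtain ⟨j, A, hA, hBeq⟩ := hmem𝒱 B (hsub (by exact_mod_cast hB))
        have hyK'j : y ∈ K' j := by have := hyB B hB; rw [hBeq] at this; exact this.2
        have hji : j = i₀ := by
          by_contra hne'
          exact hK'disj j i₀ hne' y hyK'j hyK'
        subst hji; exact ⟨A, hA, hBeq⟩
      set f : Set Y → Set Y := fun B =>
        if hB : ∃ A ∈ 𝒰 ((e.symm i₀ : ↥t) : Y), B = A ∩ K' i₀ then hB.choose else ∅ with hf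
      have hfspec : ∀ B ∈ 𝒱', f B ∈ 𝒰 ((e.symm i₀ : ↥t) : Y) ∧ B = f B ∩ K' i₀ := by
        intro B hB
        have hB' := key B hB
        simp only [hf, dif_pos hB']
        exact ⟨hB'.choose_spec.1, hB'.choose_spec.2⟩
      have hinj : Set.InjOn f ↑𝒱' := by
        intro B1 h1 B2 h2 hf12
        rw [(hfspec B1 h1).2, (hfspec B2 h2).2, hf12]
      have hcard𝒲 : (𝒱'.image f).card = 𝒱'.card := Finset.card_image_of_injOn hinj
      have hempty := hord ((e.symm i₀ : ↥t) : Y) (𝒱'.image f)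
        (by
          intro A hA
          obtain ⟨B, hB, rfl⟩ := Finset.mem_image.1 (by exact_mod_cast hA)
          exact (hfspec B hB).1)
        (by omega)
      rw [Set.eq_empty_iff_forall_notMem] at hempty
      apply hempty y
      refine Set.mem_sInter.2 fun A hA => ?_
      obtain ⟨B, hB, rfl⟩ := Finset.mem_image.1 (by exact_mod_cast hA)
      have hyB' := hyB B hB
      rw [(hfspec B hB).2] at hyB'
      exact hyB'.1
  exact sInf_le ⟨L, rfl, main⟩
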